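/- Let μ_1 and μ_2 be independent with horseshoe distributions π_HS(σ, τ_1) and π_HS(σ, τ_2) respectively (i.e., μ_i | λ_i ~ N(0, σ²τ_i²λ_i²), λ_i ~ C⁺(0,1) independently). Then δ = (μ_1 − μ_2)/σ has density π_Δ(δ) = ∫_0^∞ N(δ | 0, w) f_W(w) dw, where f_W(w) = (1/π)(τ_1√(w+τ_1²) + τ_2√(w+τ_2²)) / (√(w+τ_1²)√(w+τ_2²)(w+τ_1²+τ_2²)). -/

import Mathlib

/-!
Conditionally on the local scales, `μᵢ / σ` is a centred normal with variance `Vᵢ = τᵢ² λᵢ²`, and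
the convolution of two centred normal densities is the centred normal density with the summed
variance. Hence `δ` is a normal scale mixture whose mixing law is that of `W = V₁ + V₂`, i.e. the
convolution of the laws of `V₁` and `V₂`. The substitution `v = τ² λ²` shows that `V` has density
`τ / (π (τ² + v) √v)`, and the substitution `v = w t² / (1 + t²)` turns the convolution of two such
densities at `w` into a sum of two arctangent integrals, which is `f_W(w)`.

The Bochner integrals in `horseshoeDensity` and `piDelta` are traded for Lebesgue integrals of
`ℝ≥0∞`-valued densities; they agree almost everywhere because those densities have total mass `1`.
-/

open MeasureTheory Real Set

/-- Horseshoe marginal density with scale στ. -/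
noncomputable def horseshoeDensity (σ τ μ : ℝ) : ℝ :=
  ∫ l in Ioi (0 : ℝ),
    (2 * π * σ ^ 2 * τ ^ 2 * l ^ 2) ^ (-(1 : ℝ) / 2) *
      Real.exp (-(μ ^ 2) / (2 * σ ^ 2 * τ ^ 2 * l ^ 2)) *
      ((2 / π) * (1 + l ^ 2)⁻¹)

/-- Mixing density of the convolution of two horseshoe priors. -/
noncomputable def fW (τ₁ τ₂ w : ℝ) : ℝ :=
  if 0 < w then
    (1 / π) * (τ₁ * Real.sqrt (w + τ₁ ^ 2) + τ₂ * Real.sqrt (w + τ₂ ^ 2)) /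
      (Real.sqrt (w + τ₁ ^ 2) * Real.sqrt (w + τ₂ ^ 2) * (w + τ₁ ^ 2 + τ₂ ^ 2))
  else 0

/-- Density of the standardized difference of two independent horseshoes:
π_Δ(δ) = ∫₀^∞ N(δ | 0, w) f_W(w) dw. -/
noncomputable def piDelta (τ₁ τ₂ δ : ℝ) : ℝ :=
  ∫ w in Ioi (0 : ℝ),
    (2 * π * w) ^ (-(1 : ℝ) / 2) * Real.exp (-(δ ^ 2) / (2 * w)) * fW τ₁ τ₂ w

open scoped ENNReal

lemma map_div_const_withDensity {c : ℝ} (hc : c ≠ 0) (f : ℝ → ℝ≥0∞) :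
    (volume.withDensity f).map (· / c) =
      volume.withDensity fun y ↦ ENNReal.ofReal |c| * f (c * y) := by
  refine Measure.ext fun s hs ↦ ?_
  have hpre : (· / c) ⁻¹' s = (c * ·) '' s := by
    ext x
    refine ⟨fun hx ↦ ⟨x / c, hx, mul_div_cancel₀ x hc⟩, ?_⟩
    rintro ⟨y, hy, rfl⟩
    simpa [mul_div_cancel_left₀ y hc] using hy
  have hderiv : ∀ y ∈ s, HasDerivWithinAt (c * ·) c s y := fun y _ ↦ by
    simpa using ((hasDerivAt_id y).const_mul c).hasDerivWithinAt
  rw [Measure.map_apply (measurable_div_const c) hs,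
    withDensity_apply _ ((measurable_div_const c) hs), withDensity_apply _ hs, hpre,
    lintegral_image_eq_lintegral_abs_deriv_mul hs hderiv (mul_right_injective₀ hc).injOn]

lemma lconvolution_lintegral {G ι κ : Type*} [AddGroup G] [MeasurableSpace G]
    [MeasurableAdd₂ G] [MeasurableNeg G] [MeasurableSpace ι] [MeasurableSpace κ]
    {μ : Measure G} [SFinite μ] {ρ₁ : Measure ι} {ρ₂ : Measure κ} [SFinite ρ₁] [SFinite ρ₂]
    {K₁ : ι → G → ℝ≥0∞} {K₂ : κ → G → ℝ≥0∞} (hK₁ : Measurable (Function.uncurry K₁))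
    (hK₂ : Measurable (Function.uncurry K₂)) (x : G) :
    ((fun y ↦ ∫⁻ i, K₁ i y ∂ρ₁) ⋆ₗ[μ] fun y ↦ ∫⁻ j, K₂ j y ∂ρ₂) x =
      ∫⁻ i, ∫⁻ j, (K₁ i ⋆ₗ[μ] K₂ j) x ∂ρ₂ ∂ρ₁ := by
  simp only [lconvolution_def]
  calc ∫⁻ y, (∫⁻ i, K₁ i y ∂ρ₁) * (∫⁻ j, K₂ j (-y + x) ∂ρ₂) ∂μ
      = ∫⁻ y, ∫⁻ i, ∫⁻ j, K₁ i y * K₂ j (-y + x) ∂ρ₂ ∂ρ₁ ∂μ := by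
        refine lintegral_congr fun y ↦ ?_
        rw [← lintegral_mul_const _ (by fun_prop)]
        exact lintegral_congr fun i ↦ (lintegral_const_mul _ (by fun_prop)).symm
    _ = ∫⁻ i, ∫⁻ y, ∫⁻ j, K₁ i y * K₂ j (-y + x) ∂ρ₂ ∂μ ∂ρ₁ :=
        lintegral_lintegral_swap (by fun_prop)
    _ = ∫⁻ i, ∫⁻ j, ∫⁻ y, K₁ i y * K₂ j (-y + x) ∂μ ∂ρ₂ ∂ρ₁ :=
        lintegral_congr fun i ↦ lintegral_lintegral_swap (by fun_prop)

lemma ofReal_integral_ae_eq_lintegral {α β : Type*} [MeasurableSpace α] [MeasurableSpace β]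
    {μ : Measure α} {ν : Measure β} [SFinite ν] {F : α → β → ℝ}
    (hF : Measurable (Function.uncurry F)) (hnn : ∀ x, 0 ≤ᵐ[ν] F x)
    (hfin : ∫⁻ x, ∫⁻ y, ENNReal.ofReal (F x y) ∂ν ∂μ ≠ ∞) :
    (fun x ↦ ENNReal.ofReal (∫ y, F x y ∂ν)) =ᵐ[μ] fun x ↦ ∫⁻ y, ENNReal.ofReal (F x y) ∂ν := by
  filter_upwards [ae_lt_top (hF.ennreal_ofReal.lintegral_prod_right') hfin] with x hx
  rw [integral_eq_lintegral_of_nonneg_ae (hnn x)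
      (hF.comp measurable_prodMk_left).aestronglyMeasurable]
  exact ENNReal.ofReal_toReal hx.ne

lemma lintegral_Ioi_inv_quadratic {a b : ℝ} (ha : 0 < a) (hb : 0 < b) :
    ∫⁻ t in Ioi (0 : ℝ), ENNReal.ofReal ((a * t ^ 2 + b)⁻¹) =
      ENNReal.ofReal (π / (2 * √(a * b))) := by
  set k := √(a / b)
  have hk : 0 < k := Real.sqrt_pos.2 (div_pos ha hb)
  have hrescale : ∀ t : ℝ, (a * t ^ 2 + b)⁻¹ = b⁻¹ * (1 + (k * t) ^ 2)⁻¹ := fun t ↦ by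
    rw [mul_pow, Real.sq_sqrt (div_pos ha hb).le]
    field_simp
    ring
  have hint : IntegrableOn (fun t : ℝ ↦ (a * t ^ 2 + b)⁻¹) (Ioi 0) := by
    simp_rw [hrescale]
    exact ((integrable_inv_one_add_sq.comp_mul_left' hk.ne').const_mul _).integrableOn
  have hsqrt : √(a * b) = k * b := by
    rw [show a * b = a / b * b ^ 2 by field_simp, Real.sqrt_mul (div_pos ha hb).le,
      Real.sqrt_sq hb.le]
  rw [← ofReal_integral_eq_lintegral_ofReal hint (ae_of_all _ fun t ↦ by positivity)]
  simp_rw [hrescale]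
  rw [integral_const_mul, integral_comp_mul_left_Ioi (fun s ↦ (1 + s ^ 2)⁻¹) 0 hk, mul_zero,
    integral_Ioi_inv_one_add_sq, Real.arctan_zero, sub_zero, hsqrt, smul_eq_mul]
  congr 1
  field_simp

/-- `N(x | 0, w)`, written as in the integrand of `piDelta`. -/
noncomputable def normalPDF (w x : ℝ) : ℝ :=
  (2 * π * w) ^ (-(1 : ℝ) / 2) * Real.exp (-(x ^ 2) / (2 * w))

@[fun_prop]
lemma measurable_normalPDF : Measurable (Function.uncurry normalPDF) := by
  unfold normalPDF Function.uncurry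
  fun_prop

lemma normalPDF_eq_gaussianPDFReal {w : ℝ} (hw : 0 < w) (x : ℝ) :
    normalPDF w x = ProbabilityTheory.gaussianPDFReal 0 w.toNNReal x := by
  rw [normalPDF, ProbabilityTheory.gaussianPDFReal, Real.coe_toNNReal _ hw.le, sub_zero,
    Real.sqrt_eq_rpow, ← Real.rpow_neg (by positivity), neg_div]

lemma normalPDF_nonneg {w : ℝ} (hw : 0 < w) (x : ℝ) : 0 ≤ normalPDF w x := by
  rw [normalPDF_eq_gaussianPDFReal hw]
  exact ProbabilityTheory.gaussianPDFReal_nonneg _ _ _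

lemma lintegral_normalPDF {w : ℝ} (hw : 0 < w) : ∫⁻ x, ENNReal.ofReal (normalPDF w x) = 1 := by
  simp_rw [normalPDF_eq_gaussianPDFReal hw]
  exact ProbabilityTheory.lintegral_gaussianPDFReal_eq_one 0 (by simpa using hw)

lemma normalPDF_mul_normalPDF {A B : ℝ} (hA : 0 < A) (hB : 0 < B) (x y : ℝ) :
    normalPDF A y * normalPDF B (x - y) =
      normalPDF (A + B) x * normalPDF (A * B / (A + B)) (y - A * x / (A + B)) := by
  unfold normalPDF
  rw [mul_mul_mul_comm, mul_mul_mul_comm ((2 * π * (A + B)) ^ (-(1 : ℝ) / 2)),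
    ← Real.mul_rpow (by positivity) (by positivity),
    ← Real.mul_rpow (by positivity) (by positivity), ← Real.exp_add, ← Real.exp_add]
  congr 2
  · field_simp
  · field_simp
    ring

lemma lconvolution_normalPDF {A B : ℝ} (hA : 0 < A) (hB : 0 < B) (x : ℝ) :
    ((fun y ↦ ENNReal.ofReal (normalPDF A y)) ⋆ₗ fun y ↦ ENNReal.ofReal (normalPDF B y)) x =
      ENNReal.ofReal (normalPDF (A + B) x) := by
  have hV : 0 < A * B / (A + B) := by positivity
  calc ∫⁻ y, ENNReal.ofReal (normalPDF A y) * ENNReal.ofReal (normalPDF B (-y + x))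
      = ∫⁻ y, ENNReal.ofReal (normalPDF (A + B) x) *
          ENNReal.ofReal (normalPDF (A * B / (A + B)) (y - A * x / (A + B))) := by
        refine lintegral_congr fun y ↦ ?_
        rw [← ENNReal.ofReal_mul (normalPDF_nonneg hA y), neg_add_eq_sub,
          normalPDF_mul_normalPDF hA hB, ENNReal.ofReal_mul (normalPDF_nonneg (by positivity) x)]
    _ = ENNReal.ofReal (normalPDF (A + B) x) := by
        rw [lintegral_const_mul _ (by fun_prop),
          lintegral_sub_right_eq_self (fun y ↦ ENNReal.ofReal (normalPDF (A * B / (A + B)) y)),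
          lintegral_normalPDF hV, mul_one]

lemma abs_mul_normalPDF_mul {c w : ℝ} (hc : c ≠ 0) (hw : 0 < w) (x : ℝ) :
    |c| * normalPDF (c ^ 2 * w) (c * x) = normalPDF w x := by
  rw [normalPDF_eq_gaussianPDFReal (by positivity), normalPDF_eq_gaussianPDFReal hw,
    ProbabilityTheory.gaussianPDFReal, ProbabilityTheory.gaussianPDFReal,
    Real.coe_toNNReal _ (by positivity), Real.coe_toNNReal _ hw.le, sub_zero, sub_zero,
    show 2 * π * (c ^ 2 * w) = c ^ 2 * (2 * π * w) by ring, Real.sqrt_mul (sq_nonneg c),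
    Real.sqrt_sq_eq_abs, mul_pow]
  field_simp

noncomputable def halfCauchyPDF (l : ℝ) : ℝ := 2 / π * (1 + l ^ 2)⁻¹

@[fun_prop]
lemma measurable_halfCauchyPDF : Measurable halfCauchyPDF := by
  unfold halfCauchyPDF
  fun_prop

noncomputable def halfCauchy : Measure ℝ :=
  (volume.restrict (Ioi 0)).withDensity fun l ↦ ENNReal.ofReal (halfCauchyPDF l)

instance : IsProbabilityMeasure halfCauchy := by
  constructor
  rw [halfCauchy, withDensity_apply _ MeasurableSet.univ, Measure.restrict_univ]
  calc ∫⁻ l in Ioi (0 : ℝ), ENNReal.ofReal (halfCauchyPDF l)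
      = ∫⁻ l in Ioi (0 : ℝ), ENNReal.ofReal (2 / π) * ENNReal.ofReal ((1 * l ^ 2 + 1)⁻¹) := by
        refine lintegral_congr fun l ↦ ?_
        rw [← ENNReal.ofReal_mul (by positivity), halfCauchyPDF, one_mul, add_comm]
    _ = 1 := by
        rw [lintegral_const_mul _ (by fun_prop), lintegral_Ioi_inv_quadratic one_pos one_pos,
          ← ENNReal.ofReal_mul (by positivity), mul_one, Real.sqrt_one, mul_one,
          div_mul_div_cancel₀ Real.pi_ne_zero, div_self two_ne_zero, ENNReal.ofReal_one]

/-- The density of `τ² λ²` for `λ ~ C⁺(0, 1)`. It vanishes on `v ≤ 0`, where `√v = 0`. -/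
noncomputable def horseshoeVariancePDF (τ v : ℝ) : ℝ := τ / (π * (τ ^ 2 + v) * √v)

noncomputable def horseshoeVariance (τ : ℝ) : Measure ℝ :=
  volume.withDensity fun v ↦ ENNReal.ofReal (horseshoeVariancePDF τ v)

@[fun_prop]
lemma measurable_horseshoeVariancePDF (τ : ℝ) : Measurable (horseshoeVariancePDF τ) := by
  unfold horseshoeVariancePDF
  fun_prop

instance (τ : ℝ) : SFinite (horseshoeVariance τ) := by
  unfold horseshoeVariance
  infer_instance

lemma horseshoeVariancePDF_of_nonpos (τ : ℝ) {v : ℝ} (hv : v ≤ 0) :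
    horseshoeVariancePDF τ v = 0 := by
  rw [horseshoeVariancePDF, Real.sqrt_eq_zero'.mpr hv, mul_zero, div_zero]

lemma horseshoeVariancePDF_nonneg {τ : ℝ} (hτ : 0 ≤ τ) (v : ℝ) :
    0 ≤ horseshoeVariancePDF τ v := by
  rcases le_or_gt v 0 with hv | hv
  · rw [horseshoeVariancePDF_of_nonpos τ hv]
  · unfold horseshoeVariancePDF; positivity

lemma image_Ioi_mul_sq {τ : ℝ} (hτ : 0 < τ) : (fun l : ℝ ↦ τ ^ 2 * l ^ 2) '' Ioi 0 = Ioi 0 := by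
  refine Subset.antisymm (image_subset_iff.2 fun l (hl : 0 < l) ↦ by
    simp only [mem_preimage, mem_Ioi]; positivity) fun v (hv : 0 < v) ↦ ⟨√v / τ, ?_, ?_⟩
  · exact show 0 < √v / τ by positivity
  show τ ^ 2 * (√v / τ) ^ 2 = v
  rw [div_pow, Real.sq_sqrt hv.le]
  field_simp

lemma two_mul_sq_mul_horseshoeVariancePDF {τ l : ℝ} (hτ : 0 < τ) (hl : 0 < l) :
    2 * τ ^ 2 * l * horseshoeVariancePDF τ (τ ^ 2 * l ^ 2) = halfCauchyPDF l := by
  rw [horseshoeVariancePDF, halfCauchyPDF, show τ ^ 2 * l ^ 2 = (τ * l) ^ 2 by ring,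
    Real.sqrt_sq (by positivity)]
  field_simp

lemma map_halfCauchy {τ : ℝ} (hτ : 0 < τ) :
    halfCauchy.map (fun l ↦ τ ^ 2 * l ^ 2) = horseshoeVariance τ := by
  refine Measure.ext_of_lintegral _ fun φ hφ ↦ ?_
  have hderiv : ∀ l ∈ Ioi (0 : ℝ),
      HasDerivWithinAt (fun l ↦ τ ^ 2 * l ^ 2) (2 * τ ^ 2 * l) (Ioi 0) l := fun l _ ↦ by
    simpa [mul_comm, mul_left_comm, mul_assoc] using
      ((hasDerivAt_pow 2 l).const_mul (τ ^ 2)).hasDerivWithinAt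
  have hinj : InjOn (fun l : ℝ ↦ τ ^ 2 * l ^ 2) (Ioi 0) :=
    StrictMonoOn.injOn fun x (hx : 0 < x) y _ hxy ↦ by gcongr
  have hsupp : (fun v ↦ ENNReal.ofReal (horseshoeVariancePDF τ v) * φ v).support ⊆ Ioi 0 :=
    fun v hv ↦ show 0 < v from not_le.1 fun h ↦ hv (by simp [horseshoeVariancePDF_of_nonpos τ h])
  rw [lintegral_map hφ (by fun_prop), halfCauchy, horseshoeVariance,
    lintegral_withDensity_eq_lintegral_mul _ (by fun_prop) (by fun_prop),
    lintegral_withDensity_eq_lintegral_mul _ (by fun_prop) hφ]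
  simp only [Pi.mul_apply]
  rw [← setLIntegral_eq_of_support_subset hsupp]
  conv_rhs => rw [← image_Ioi_mul_sq hτ,
    lintegral_image_eq_lintegral_abs_deriv_mul measurableSet_Ioi hderiv hinj]
  refine setLIntegral_congr_fun measurableSet_Ioi fun l (hl : 0 < l) ↦ ?_
  rw [← mul_assoc, ← ENNReal.ofReal_mul (abs_nonneg _), abs_of_pos (by positivity),
    two_mul_sq_mul_horseshoeVariancePDF hτ hl]

lemma isProbabilityMeasure_horseshoeVariance {τ : ℝ} (hτ : 0 < τ) :
    IsProbabilityMeasure (horseshoeVariance τ) := by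
  rw [← map_halfCauchy hτ]
  exact Measure.isProbabilityMeasure_map (by fun_prop)

lemma ae_pos_horseshoeVariance (τ : ℝ) : ∀ᵐ v ∂horseshoeVariance τ, 0 < v := by
  rw [horseshoeVariance, ae_withDensity_iff (by fun_prop)]
  exact ae_of_all _ fun v hv ↦ not_le.1 fun h ↦ hv (by simp [horseshoeVariancePDF_of_nonpos τ h])

@[fun_prop]
lemma measurable_fW (τ₁ τ₂ : ℝ) : Measurable (fW τ₁ τ₂) := by
  unfold fW
  exact Measurable.ite measurableSet_Ioi (by fun_prop) measurable_const

lemma fW_nonneg {τ₁ τ₂ : ℝ} (hτ₁ : 0 ≤ τ₁) (hτ₂ : 0 ≤ τ₂) (w : ℝ) : 0 ≤ fW τ₁ τ₂ w := by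
  unfold fW
  split_ifs with hw
  · positivity
  · exact le_rfl

lemma image_Ioi_mul_sq_div_one_add_sq {w : ℝ} (hw : 0 < w) :
    (fun t : ℝ ↦ w * t ^ 2 / (1 + t ^ 2)) '' Ioi 0 = Ioo 0 w := by
  refine Subset.antisymm (image_subset_iff.2 fun t (ht : 0 < t) ↦ ⟨by positivity, ?_⟩)
    fun v ⟨hv0, hvw⟩ ↦ ⟨√(v / (w - v)), ?_, ?_⟩
  · show w * t ^ 2 / (1 + t ^ 2) < w
    rw [div_lt_iff₀ (by positivity)]
    nlinarith
  · exact show 0 < √(v / (w - v)) from Real.sqrt_pos.2 (div_pos hv0 (by linarith))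
  · show w * √(v / (w - v)) ^ 2 / (1 + √(v / (w - v)) ^ 2) = v
    have : w - v ≠ 0 := by linarith
    rw [Real.sq_sqrt (div_pos hv0 (by linarith)).le]
    field_simp
    ring

/-- Under `v = w t² / (1 + t²)`, the convolution integrand of the two variance densities
splits into partial fractions: `(1 + t²) / (P Q) = (P⁻¹ + Q⁻¹) / (w + τ₁² + τ₂²)`, since
`P + Q = (w + τ₁² + τ₂²) (1 + t²)`. -/
lemma jacobian_mul_horseshoeVariancePDF_mul {τ₁ τ₂ w t : ℝ} (hτ₁ : 0 < τ₁) (hτ₂ : 0 < τ₂)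
    (hw : 0 < w) (ht : 0 < t) :
    2 * w * t / (1 + t ^ 2) ^ 2 * (horseshoeVariancePDF τ₁ (w * t ^ 2 / (1 + t ^ 2)) *
      horseshoeVariancePDF τ₂ (w - w * t ^ 2 / (1 + t ^ 2))) =
      2 * τ₁ * τ₂ / (π ^ 2 * (w + τ₁ ^ 2 + τ₂ ^ 2)) *
        (((τ₁ ^ 2 + w) * t ^ 2 + τ₁ ^ 2)⁻¹ + (τ₂ ^ 2 * t ^ 2 + (τ₂ ^ 2 + w))⁻¹) := by
  set v := w * t ^ 2 / (1 + t ^ 2)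
  have hwv : w - v = w / (1 + t ^ 2) := by simp only [v]; field_simp; ring
  have hsqrt : √v * √(w - v) = w * t / (1 + t ^ 2) := by
    rw [← Real.sqrt_mul (by positivity), hwv,
      show v * (w / (1 + t ^ 2)) = (w * t / (1 + t ^ 2)) ^ 2 by simp only [v]; ring,
      Real.sqrt_sq (by positivity)]
  have hprod : horseshoeVariancePDF τ₁ v * horseshoeVariancePDF τ₂ (w - v) =
      τ₁ * τ₂ / (π ^ 2 * (τ₁ ^ 2 + v) * (τ₂ ^ 2 + (w - v)) * (√v * √(w - v))) := by
    rw [horseshoeVariancePDF, horseshoeVariancePDF, div_mul_div_comm]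
    ring
  rw [hprod, hsqrt, hwv]
  simp only [v]
  field_simp
  ring

lemma setLIntegral_Ioo_horseshoeVariancePDF_mul {τ₁ τ₂ w : ℝ} (hτ₁ : 0 < τ₁) (hτ₂ : 0 < τ₂)
    (hw : 0 < w) :
    ∫⁻ v in Ioo 0 w, ENNReal.ofReal (horseshoeVariancePDF τ₁ v) *
        ENNReal.ofReal (horseshoeVariancePDF τ₂ (w - v)) = ENNReal.ofReal (fW τ₁ τ₂ w) := by
  have hderiv : ∀ t ∈ Ioi (0 : ℝ), HasDerivWithinAt (fun t ↦ w * t ^ 2 / (1 + t ^ 2))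
      (2 * w * t / (1 + t ^ 2) ^ 2) (Ioi 0) t := fun t _ ↦ by
    have h := ((hasDerivAt_pow 2 t).const_mul w).div ((hasDerivAt_pow 2 t).const_add 1)
      (by positivity)
    refine (h.congr_deriv ?_).hasDerivWithinAt
    field_simp
    ring
  have hinj : InjOn (fun t : ℝ ↦ w * t ^ 2 / (1 + t ^ 2)) (Ioi 0) := by
    refine StrictMonoOn.injOn fun x (hx : 0 < x) y _ hxy ↦ ?_
    show w * x ^ 2 / (1 + x ^ 2) < w * y ^ 2 / (1 + y ^ 2)
    rw [div_lt_div_iff₀ (by positivity) (by positivity)]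
    nlinarith [mul_lt_mul_of_pos_left (pow_lt_pow_left₀ hxy hx.le two_ne_zero) hw]
  set K := 2 * τ₁ * τ₂ / (π ^ 2 * (w + τ₁ ^ 2 + τ₂ ^ 2))
  rw [← image_Ioi_mul_sq_div_one_add_sq hw,
    lintegral_image_eq_lintegral_abs_deriv_mul measurableSet_Ioi hderiv hinj]
  calc ∫⁻ t in Ioi 0, ENNReal.ofReal |2 * w * t / (1 + t ^ 2) ^ 2| *
        (ENNReal.ofReal (horseshoeVariancePDF τ₁ (w * t ^ 2 / (1 + t ^ 2))) *
          ENNReal.ofReal (horseshoeVariancePDF τ₂ (w - w * t ^ 2 / (1 + t ^ 2))))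
      = ∫⁻ t in Ioi 0, ENNReal.ofReal K *
          (ENNReal.ofReal (((τ₁ ^ 2 + w) * t ^ 2 + τ₁ ^ 2)⁻¹) +
            ENNReal.ofReal ((τ₂ ^ 2 * t ^ 2 + (τ₂ ^ 2 + w))⁻¹)) := by
        refine setLIntegral_congr_fun measurableSet_Ioi fun t (ht : 0 < t) ↦ ?_
        rw [← ENNReal.ofReal_mul (horseshoeVariancePDF_nonneg hτ₁.le _),
          ← ENNReal.ofReal_mul (abs_nonneg _), abs_of_pos (by positivity),
          jacobian_mul_horseshoeVariancePDF_mul hτ₁ hτ₂ hw ht,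
          ← ENNReal.ofReal_add (by positivity) (by positivity),
          ← ENNReal.ofReal_mul (by positivity)]
    _ = ENNReal.ofReal (fW τ₁ τ₂ w) := by
        rw [lintegral_const_mul _ (by fun_prop), lintegral_add_left (by fun_prop),
          lintegral_Ioi_inv_quadratic (by positivity) (by positivity),
          lintegral_Ioi_inv_quadratic (by positivity) (by positivity),
          ← ENNReal.ofReal_add (by positivity) (by positivity),
          ← ENNReal.ofReal_mul (by positivity), fW, if_pos hw,
          Real.sqrt_mul (by positivity), Real.sqrt_sq hτ₁.le, Real.sqrt_mul' _ (by positivity),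
          Real.sqrt_sq hτ₂.le, add_comm (τ₁ ^ 2), add_comm (τ₂ ^ 2)]
        congr 1
        simp only [K]
        field_simp
        ring

lemma lconvolution_horseshoeVariancePDF {τ₁ τ₂ : ℝ} (hτ₁ : 0 < τ₁) (hτ₂ : 0 < τ₂) (w : ℝ) :
    ((fun v ↦ ENNReal.ofReal (horseshoeVariancePDF τ₁ v)) ⋆ₗ
      fun v ↦ ENNReal.ofReal (horseshoeVariancePDF τ₂ v)) w = ENNReal.ofReal (fW τ₁ τ₂ w) := by
  have hsupp : (fun v ↦ ENNReal.ofReal (horseshoeVariancePDF τ₁ v) *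
      ENNReal.ofReal (horseshoeVariancePDF τ₂ (-v + w))).support ⊆ Ioo 0 w := fun v hv ↦ by
    by_contra hvw
    rcases not_and_or.1 hvw with h | h <;> apply hv <;> simp only [not_lt] at h
    · simp [horseshoeVariancePDF_of_nonpos τ₁ h]
    · simp [horseshoeVariancePDF_of_nonpos τ₂ (by linarith : -v + w ≤ 0)]
  rw [lconvolution_def, ← setLIntegral_eq_of_support_subset hsupp]
  rcases le_or_gt w 0 with hw | hw
  · rw [Ioo_eq_empty (by linarith), Measure.restrict_empty, lintegral_zero_measure, fW,
      if_neg (not_lt.2 hw), ENNReal.ofReal_zero]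
  · simp_rw [neg_add_eq_sub]
    exact setLIntegral_Ioo_horseshoeVariancePDF_mul hτ₁ hτ₂ hw

noncomputable def stdHorseshoeDensity (τ : ℝ) : ℝ → ℝ≥0∞ :=
  fun x ↦ ∫⁻ v, ENNReal.ofReal (normalPDF v x) ∂horseshoeVariance τ

@[fun_prop]
lemma measurable_stdHorseshoeDensity (τ : ℝ) : Measurable (stdHorseshoeDensity τ) :=
  Measurable.lintegral_prod_left' (f := fun p : ℝ × ℝ ↦ ENNReal.ofReal (normalPDF p.1 p.2))
    (by fun_prop)

lemma lintegral_stdHorseshoeDensity {τ : ℝ} (hτ : 0 < τ) :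
    ∫⁻ x, stdHorseshoeDensity τ x = 1 := by
  have := isProbabilityMeasure_horseshoeVariance hτ
  unfold stdHorseshoeDensity
  rw [lintegral_lintegral_swap (by fun_prop)]
  calc ∫⁻ v, (∫⁻ x, ENNReal.ofReal (normalPDF v x)) ∂horseshoeVariance τ
      = ∫⁻ _, 1 ∂horseshoeVariance τ :=
        lintegral_congr_ae ((ae_pos_horseshoeVariance τ).mono fun v hv ↦ lintegral_normalPDF hv)
    _ = 1 := by simp

lemma stdHorseshoeDensity_eq_setLIntegral {τ : ℝ} (hτ : 0 < τ) (x : ℝ) :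
    stdHorseshoeDensity τ x =
      ∫⁻ l in Ioi 0, ENNReal.ofReal (normalPDF (τ ^ 2 * l ^ 2) x * halfCauchyPDF l) := by
  rw [stdHorseshoeDensity, ← map_halfCauchy hτ, lintegral_map (by fun_prop) (by fun_prop),
    halfCauchy, lintegral_withDensity_eq_lintegral_mul _ (by fun_prop) (by fun_prop)]
  refine setLIntegral_congr_fun measurableSet_Ioi fun l (hl : 0 < l) ↦ ?_
  rw [Pi.mul_apply, mul_comm, ENNReal.ofReal_mul (normalPDF_nonneg (by positivity) x)]

lemma abs_mul_horseshoeDensity {c τ : ℝ} (hc : c ≠ 0) (hτ : 0 < τ) (x : ℝ) :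
    |c| * horseshoeDensity |c| τ (c * x) =
      ∫ l in Ioi 0, normalPDF (τ ^ 2 * l ^ 2) x * halfCauchyPDF l := by
  rw [horseshoeDensity, ← integral_const_mul]
  refine setIntegral_congr_fun measurableSet_Ioi fun l (hl : 0 < l) ↦ ?_
  rw [← abs_mul_normalPDF_mul hc (show 0 < τ ^ 2 * l ^ 2 by positivity) x, normalPDF,
    halfCauchyPDF, sq_abs]
  ring_nf

lemma map_div_withDensity_horseshoeDensity {c σ τ : ℝ} (hσ : 0 < σ) (hc : |c| = σ)
    (hτ : 0 < τ) :
    (volume.withDensity fun x ↦ ENNReal.ofReal (horseshoeDensity σ τ x)).map (· / c) =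
      volume.withDensity (stdHorseshoeDensity τ) := by
  subst hc
  have hc : c ≠ 0 := abs_pos.1 hσ
  have hae := ofReal_integral_ae_eq_lintegral (μ := volume) (ν := volume.restrict (Ioi 0))
    (F := fun x l ↦ normalPDF (τ ^ 2 * l ^ 2) x * halfCauchyPDF l) (by fun_prop)
    (fun x ↦ (ae_restrict_mem measurableSet_Ioi).mono fun l (hl : 0 < l) ↦
      mul_nonneg (normalPDF_nonneg (by positivity) x) (by unfold halfCauchyPDF; positivity))
    (by simp_rw [← stdHorseshoeDensity_eq_setLIntegral hτ, lintegral_stdHorseshoeDensity hτ]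
        exact ENNReal.one_ne_top)
  rw [map_div_const_withDensity hc]
  refine withDensity_congr_ae (hae.mono fun x hx ↦ ?_)
  dsimp only at hx ⊢
  rw [← ENNReal.ofReal_mul (abs_nonneg c), abs_mul_horseshoeDensity hc hτ, hx,
    stdHorseshoeDensity_eq_setLIntegral hτ]

lemma lconvolution_stdHorseshoeDensity {τ₁ τ₂ : ℝ} (hτ₁ : 0 < τ₁) (hτ₂ : 0 < τ₂) (δ : ℝ) :
    (stdHorseshoeDensity τ₁ ⋆ₗ stdHorseshoeDensity τ₂) δ =
      ∫⁻ w in Ioi 0, ENNReal.ofReal (normalPDF w δ * fW τ₁ τ₂ w) := by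
  have hconv : horseshoeVariance τ₁ ∗ horseshoeVariance τ₂ =
      volume.withDensity fun w ↦ ENNReal.ofReal (fW τ₁ τ₂ w) := by
    rw [horseshoeVariance, horseshoeVariance,
      conv_withDensity_eq_lconvolution (by fun_prop) (by fun_prop)]
    exact congrArg _ (funext (lconvolution_horseshoeVariancePDF hτ₁ hτ₂))
  have hsupp : (fun w ↦ ENNReal.ofReal (fW τ₁ τ₂ w) * ENNReal.ofReal (normalPDF w δ)).support ⊆
      Ioi 0 := fun w hw ↦ show 0 < w from not_le.1 fun h ↦ hw (by simp [fW, not_lt.2 h])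
  calc (stdHorseshoeDensity τ₁ ⋆ₗ stdHorseshoeDensity τ₂) δ
      = ∫⁻ v₁, ∫⁻ v₂, ENNReal.ofReal (normalPDF (v₁ + v₂) δ)
          ∂horseshoeVariance τ₂ ∂horseshoeVariance τ₁ := by
        unfold stdHorseshoeDensity
        rw [lconvolution_lintegral (by fun_prop) (by fun_prop)]
        exact lintegral_congr_ae ((ae_pos_horseshoeVariance τ₁).mono fun v₁ h₁ ↦
          lintegral_congr_ae ((ae_pos_horseshoeVariance τ₂).mono fun v₂ h₂ ↦
            lconvolution_normalPDF h₁ h₂ δ))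
    _ = ∫⁻ w, ENNReal.ofReal (normalPDF w δ) ∂(horseshoeVariance τ₁ ∗ horseshoeVariance τ₂) :=
        (Measure.lintegral_conv (f := fun w ↦ ENNReal.ofReal (normalPDF w δ)) (by fun_prop)).symm
    _ = ∫⁻ w, ENNReal.ofReal (fW τ₁ τ₂ w) * ENNReal.ofReal (normalPDF w δ) := by
        rw [hconv, lintegral_withDensity_eq_lintegral_mul _ (by fun_prop) (by fun_prop)]
        rfl
    _ = ∫⁻ w in Ioi 0, ENNReal.ofReal (normalPDF w δ * fW τ₁ τ₂ w) := by
        rw [← setLIntegral_eq_of_support_subset hsupp]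
        refine setLIntegral_congr_fun measurableSet_Ioi fun w (hw : 0 < w) ↦ ?_
        rw [mul_comm, ENNReal.ofReal_mul (normalPDF_nonneg hw δ)]

/-- If μ₁, μ₂ are independent with horseshoe distributions
π_HS(σ,τ₁), π_HS(σ,τ₂), then δ = (μ₁ − μ₂)/σ has density π_Δ. -/
theorem horseshoe_difference_density
    {Ω : Type*} [MeasurableSpace Ω] (ℙ : Measure Ω) [IsProbabilityMeasure ℙ]
    (σ τ₁ τ₂ : ℝ) (hσ : 0 < σ) (hτ₁ : 0 < τ₁) (hτ₂ : 0 < τ₂)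
    (μ₁ μ₂ : Ω → ℝ) (hm₁ : Measurable μ₁) (hm₂ : Measurable μ₂)
    (hindep : ProbabilityTheory.IndepFun μ₁ μ₂ ℙ)
    (hlaw₁ : Measure.map μ₁ ℙ =
      volume.withDensity (fun x => ENNReal.ofReal (horseshoeDensity σ τ₁ x)))
    (hlaw₂ : Measure.map μ₂ ℙ =
      volume.withDensity (fun x => ENNReal.ofReal (horseshoeDensity σ τ₂ x))) :
    Measure.map (fun ω => (μ₁ ω - μ₂ ω) / σ) ℙ =
      volume.withDensity (fun δ => ENNReal.ofReal (piDelta τ₁ τ₂ δ)) := by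
  have hsplit : (fun ω ↦ (μ₁ ω - μ₂ ω) / σ) = (fun ω ↦ μ₁ ω / σ) + fun ω ↦ μ₂ ω / -σ := by
    funext ω
    simp only [Pi.add_apply, div_neg]
    ring
  have hlaw : ℙ.map (fun ω ↦ (μ₁ ω - μ₂ ω) / σ) = volume.withDensity
      fun δ ↦ ∫⁻ w in Ioi 0, ENNReal.ofReal (normalPDF w δ * fW τ₁ τ₂ w) := by
    rw [hsplit, (hindep.comp (measurable_div_const σ) (measurable_div_const (-σ))
        |>.map_add_eq_map_conv_map (hm₁.div_const σ) (hm₂.div_const (-σ))),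
      ← show (ℙ.map μ₁).map (· / σ) = ℙ.map (fun ω ↦ μ₁ ω / σ) from
        Measure.map_map (measurable_div_const σ) hm₁,
      ← show (ℙ.map μ₂).map (· / -σ) = ℙ.map (fun ω ↦ μ₂ ω / -σ) from
        Measure.map_map (measurable_div_const (-σ)) hm₂,
      hlaw₁, hlaw₂, map_div_withDensity_horseshoeDensity hσ (abs_of_pos hσ) hτ₁,
      map_div_withDensity_horseshoeDensity hσ (by rw [abs_neg, abs_of_pos hσ]) hτ₂,
      conv_withDensity_eq_lconvolution (by fun_prop) (by fun_prop),
      funext (lconvolution_stdHorseshoeDensity hτ₁ hτ₂)]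
  have hfin : ∫⁻ δ, ∫⁻ w in Ioi 0, ENNReal.ofReal (normalPDF w δ * fW τ₁ τ₂ w) ≠ ∞ := by
    rw [← setLIntegral_univ, ← withDensity_apply _ MeasurableSet.univ, ← hlaw]
    exact measure_ne_top _ _
  rw [hlaw]
  refine withDensity_congr_ae (ofReal_integral_ae_eq_lintegral (by fun_prop) (fun δ ↦ ?_) hfin).symm
  exact (ae_restrict_mem measurableSet_Ioi).mono fun w (hw : 0 < w) ↦
    mul_nonneg (normalPDF_nonneg hw δ) (fW_nonneg hτ₁.le hτ₂.le w)
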